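/- For d odd and n ≥ 1, the global Fourier transform F_G on C^{d^n}, defined via F_G|X;ĵ⟩ = (1/√(d^n))∑_k̂ ω_{d^n}(ĵk̂)|X;k̂⟩, satisfies F_G² = F_L², where F_L = F⊗...⊗F is the n-fold tensor of the d-dimensional Fourier transform and the tensor basis is identified with Z/(d^n)Z via (j₀,...,j_{n-1}) ↦ j₀+j₁d+...+j_{n-1}d^{n-1} using symmetric representatives. -/

import Mathlib

/-! Both squares are parity operators: orthogonality of the characters of `ZMod m` gives
`(F_m²)_{ab} = [a + b = 0]`, hence `(F_L²)_{jk} = [j + k = 0]` and `(F_G²)_{ĵk̂} = [ĵ + k̂ = 0]`.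
For odd `d` the balanced base-`d` encoding `j ↦ ĵ` is odd and injective (a multiple of `dⁿ`
whose balanced digits satisfy `|c_r| < d` must vanish), so `ĵ + k̂ = 0 ↔ j + k = 0`. -/

open Matrix

/-- `ω m a = exp(2πi a / m)` for `a : ZMod m`. -/
noncomputable def ω (m : ℕ) (a : ZMod m) : ℂ :=
  Complex.exp (2 * (Real.pi : ℂ) * Complex.I * (a.val : ℂ) / (m : ℂ))

/-- The finite Fourier transform matrix `F_{jk} = ω_d(jk)/√d`. -/
noncomputable def Fmat (d : ℕ) [NeZero d] : Matrix (ZMod d) (ZMod d) ℂ :=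
  fun j k => (1 / (Real.sqrt d : ℂ)) * ω d (j * k)

/-- The symmetric-interval representative of `x : ZMod d`, lying in `[-(d-1)/2, (d-1)/2]`
for odd `d`. -/
def valMin (d : ℕ) (x : ZMod d) : ℤ :=
  if (x.val : ℤ) ≤ ((d : ℤ) - 1) / 2 then (x.val : ℤ) else (x.val : ℤ) - d

/-- The map `(j₀,...,j_{n-1}) ↦ j₀ + j₁ d + ... + j_{n-1} d^{n-1} (mod dⁿ)`,
using symmetric representatives. -/
def encMap (d n : ℕ) [NeZero d] (j : Fin n → ZMod d) : ZMod (d ^ n) :=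
  ((∑ r : Fin n, valMin d (j r) * (d : ℤ) ^ (r : ℕ) : ℤ) : ZMod (d ^ n))

/-- The local Fourier transform `F_L = F ⊗ ... ⊗ F` on the n-fold tensor basis. -/
noncomputable def FLmat (d n : ℕ) [NeZero d] :
    Matrix (Fin n → ZMod d) (Fin n → ZMod d) ℂ :=
  fun j k => ∏ r : Fin n, Fmat d (j r) (k r)

lemma ω_eq_stdAddChar (m : ℕ) [NeZero m] (a : ZMod m) : ω m a = ZMod.stdAddChar a := by
  rw [ZMod.stdAddChar_apply, ZMod.toCircle_apply, ω]

lemma Fmat_mul_self_apply (m : ℕ) [NeZero m] (a b : ZMod m) :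
    (Fmat m * Fmat m) a b = if a + b = 0 then 1 else 0 := by
  have hsqrt : (Real.sqrt m : ℂ) * Real.sqrt m = m := by
    rw [← Complex.ofReal_mul, Real.mul_self_sqrt m.cast_nonneg, Complex.ofReal_natCast]
  have hm : (m : ℂ) ≠ 0 := Nat.cast_ne_zero.mpr (NeZero.ne m)
  calc (Fmat m * Fmat m) a b
      = (1 / m) * ∑ c : ZMod m, ZMod.stdAddChar (c * (a + b)) := by
        simp only [Matrix.mul_apply, Fmat, ω_eq_stdAddChar, Finset.mul_sum, ← hsqrt]
        refine Finset.sum_congr rfl fun c _ => ?_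
        rw [mul_add, AddChar.map_add_eq_mul, mul_comm c a]
        ring
    _ = if a + b = 0 then 1 else 0 := by
        rw [AddChar.sum_mulShift _ (ZMod.isPrimitive_stdAddChar m), ZMod.card]
        split_ifs <;> simp [hm]

lemma FLmat_mul_self_apply (d n : ℕ) [NeZero d] (j k : Fin n → ZMod d) :
    (FLmat d n * FLmat d n) j k = if j + k = 0 then 1 else 0 := by
  calc (FLmat d n * FLmat d n) j k = ∏ r, (Fmat d * Fmat d) (j r) (k r) := by
        simp only [Matrix.mul_apply, FLmat, ← Finset.prod_mul_distrib]
        exact (Finset.prod_univ_sum (fun _ => Finset.univ)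
          (fun r l => Fmat d (j r) l * Fmat d l (k r))).symm
    _ = if j + k = 0 then 1 else 0 := by
        simp [Fmat_mul_self_apply, Fintype.prod_boole, funext_iff]

theorem eq_zero_of_pow_dvd_sum_mul_pow {b : ℤ} :
    ∀ {n : ℕ} (c : Fin n → ℤ), (∀ r, |c r| < b) → b ^ n ∣ ∑ r, c r * b ^ (r : ℕ) → c = 0
  | 0, c, _, _ => Subsingleton.elim _ _
  | n + 1, c, hc, hdvd => by
    have hb : b ≠ 0 := ((abs_nonneg _).trans_lt (hc 0)).ne'
    have hsum : ∑ r, c r * b ^ (r : ℕ) = c 0 + b * ∑ r : Fin n, c r.succ * b ^ (r : ℕ) := by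
      rw [Fin.sum_univ_succ, Finset.mul_sum]
      simp only [Fin.val_zero, pow_zero, mul_one, Fin.val_succ, pow_succ]
      congr 1; refine Finset.sum_congr rfl fun r _ => by ring
    rw [hsum] at hdvd
    have hc0 : c 0 = 0 := by
      refine Int.eq_zero_of_abs_lt_dvd ?_ (hc 0)
      exact (dvd_add_left (dvd_mul_right _ _)).mp ((dvd_pow_self b n.succ_ne_zero).trans hdvd)
    rw [hc0, zero_add, pow_succ', mul_dvd_mul_iff_left hb] at hdvd
    have htail := eq_zero_of_pow_dvd_sum_mul_pow _ (fun r => hc r.succ) hdvd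
    funext r
    exact Fin.cases hc0 (fun r => congrFun htail r) r

section Encoding

variable {d : ℕ} [NeZero d]

lemma valMin_eq_valMinAbs (hd : Odd d) (x : ZMod d) : valMin d x = x.valMinAbs := by
  obtain ⟨t, rfl⟩ := hd
  rw [valMin, ZMod.valMinAbs_def_pos]
  congr 1
  apply propext
  omega

lemma abs_valMinAbs_sub_lt (hd : Odd d) (a b : ZMod d) : |a.valMinAbs - b.valMinAbs| < d := by
  have ha := ZMod.natAbs_valMinAbs_le a
  have hb := ZMod.natAbs_valMinAbs_le b
  obtain ⟨t, rfl⟩ := hd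
  rw [abs_lt]
  omega

lemma encMap_eq_sum_valMinAbs (hd : Odd d) {n : ℕ} (j : Fin n → ZMod d) :
    encMap d n j = ((∑ r, (j r).valMinAbs * (d : ℤ) ^ (r : ℕ) : ℤ) : ZMod (d ^ n)) := by
  simp only [encMap, valMin_eq_valMinAbs hd]

lemma encMap_neg (hd : Odd d) {n : ℕ} (j : Fin n → ZMod d) :
    encMap d n (-j) = -encMap d n j := by
  have hhalf (a : ZMod d) : 2 * a.val ≠ d := fun h => Nat.not_even_iff_odd.mpr hd ⟨a.val, by omega⟩
  simp only [encMap_eq_sum_valMinAbs hd, Pi.neg_apply, ZMod.valMinAbs_neg_of_ne_half (hhalf _),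
    neg_mul, Finset.sum_neg_distrib, Int.cast_neg]

lemma encMap_injective (hd : Odd d) (n : ℕ) : Function.Injective (encMap d n) := by
  intro j k h
  rw [encMap_eq_sum_valMinAbs hd, encMap_eq_sum_valMinAbs hd,
    ZMod.intCast_eq_intCast_iff_dvd_sub, ← Finset.sum_sub_distrib] at h
  simp only [← sub_mul, Nat.cast_pow] at h
  have hzero := eq_zero_of_pow_dvd_sum_mul_pow _ (fun r => abs_valMinAbs_sub_lt hd (k r) (j r)) h
  funext r
  exact ZMod.valMinAbs_inj.mp (sub_eq_zero.mp (congrFun hzero r)).symm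

lemma encMap_add_eq_zero_iff (hd : Odd d) {n : ℕ} (j k : Fin n → ZMod d) :
    encMap d n j + encMap d n k = 0 ↔ j + k = 0 := by
  rw [add_eq_zero_iff_neg_eq, ← encMap_neg hd, (encMap_injective hd n).eq_iff,
    add_eq_zero_iff_neg_eq]

end Encoding

theorem stmt10_general (d n : ℕ) [NeZero d] [NeZero (d ^ n)] (hd : Odd d) :
    ∀ j k : Fin n → ZMod d,
      (FLmat d n * FLmat d n) j k =
        (Fmat (d ^ n) * Fmat (d ^ n)) (encMap d n j) (encMap d n k) := by
  intro j k
  simp only [FLmat_mul_self_apply, Fmat_mul_self_apply, encMap_add_eq_zero_iff hd]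

/-- `F_G² = F_L²` under the symmetric-representative identification of the bases. -/
theorem stmt10 (d n : ℕ) [NeZero d] [NeZero (d ^ n)] (hd : Odd d) (hn : 1 ≤ n) :
    ∀ j k : Fin n → ZMod d,
      (FLmat d n * FLmat d n) j k =
        (Fmat (d ^ n) * Fmat (d ^ n)) (encMap d n j) (encMap d n k) :=
  stmt10_general d n hd
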